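/- arXiv:1112.2351 — 3 statements merged into one kernel-verified Lean document; each statement's English description precedes it below -/
import Mathlib

section
/- Let p, r : [0,1] → ℝ be continuous with p(x) > 0 and r(x) > 0 for all x ∈ [0,1]. Let y be a nontrivial classical solution of (p·y'')'' − r·y = 0 on [0,1]. If for some a ∈ (0,1] one has y(a) ≥ 0, y'(a) ≤ 0, y''(a) ≥ 0 and (p·y'')'(a) ≤ 0, then y(0) > 0, y'(0) < 0, y''(0) > 0 and (p·y'')'(0) < 0. -/
open Set

/-- Derivative within the interval `[0,1]`. -/
noncomputable def Dv (y : ℝ → ℝ) : ℝ → ℝ := derivWithin y (Set.Icc 0 1)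

/-!
The state `(y, y', p y'', (p y'')')` solves `X' = A X` for the nonnegative matrix
`A = beamMatrix p r` (entries `1, 1/p, 1, r` on a cycle), and `(y, -y', p y'', -(p y'')')` solves
`X' = -A X`.
Linear systems with a nonnegative coefficient matrix preserve the nonnegative orthant
(perturb by `ε exp (K x)` and look at the first point where a component would fail to be
positive); run backwards from `a`, this makes `y, -y', p y'', -(p y'')'` nonnegative on `[0, a]`,
and run forwards on `±X`, it gives uniqueness for the initial value problem. Since `y` is
nonnegative and nonincreasing on `[0, a]`, `y 0 = 0` would make `y` vanish on `[0, a]` and then,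
by uniqueness, on `[0, 1]`. So `y 0 > 0`, and then `(p y'')'' = r y > 0` near `0` forces
`(p y'')' 0 < 0`, which in turn forces `p y'' 0 > 0` and finally `y' 0 < 0`.
-/

open Filter Topology

section Cooperative

variable {ι : Type*} [Fintype ι] {A : ℝ → ι → ι → ℝ} {u : ι → ℝ → ℝ} {a b L : ℝ}

theorem sum_mul_add_pos_of_neg_lt {c v : ι → ℝ} {e : ℝ} (he : 0 < e) (hc : ∀ j, 0 ≤ c j)
    (hcL : ∀ j, c j ≤ L) (hv : ∀ j, -e < v j) :
    0 < ∑ j, c j * v j + (Fintype.card ι * L + 1) * e := by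
  have hsum : -(e * ∑ j, c j) ≤ ∑ j, c j * v j := by
    rw [Finset.mul_sum, ← Finset.sum_neg_distrib]
    exact Finset.sum_le_sum fun j _ => by nlinarith [mul_le_mul_of_nonneg_left (hv j).le (hc j)]
  have hcard : ∑ j, c j ≤ Fintype.card ι * L := by
    simpa using Finset.sum_le_card_nsmul Finset.univ _ L fun j _ => hcL j
  nlinarith [mul_le_mul_of_nonneg_left hcard he.le]

theorem pos_add_exp_of_hasDerivAt_sum_mul
    (hA : ∀ x ∈ Ioo a b, ∀ i j, 0 ≤ A x i j) (hAL : ∀ x ∈ Ioo a b, ∀ i j, A x i j ≤ L)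
    (hu : ∀ i, ContinuousOn (u i) (Icc a b))
    (hu' : ∀ i, ∀ x ∈ Ioo a b, HasDerivAt (u i) (∑ j, A x i j * u j x) x)
    (ha : ∀ i, 0 ≤ u i a) {ε : ℝ} (hε : 0 < ε) :
    ∀ i, ∀ x ∈ Icc a b, 0 < u i x + ε * Real.exp ((Fintype.card ι * L + 1) * (x - a)) := by
  set K : ℝ := Fintype.card ι * L + 1
  set E : ℝ → ℝ := fun x => ε * Real.exp (K * (x - a))
  have hE : ∀ x, HasDerivAt E (K * E x) x := fun x => by
    refine ((((hasDerivAt_id x).sub_const a).const_mul K).exp.const_mul ε).congr_deriv ?_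
    simp only [E, id]; ring
  have hEpos : ∀ x, 0 < E x := fun x => mul_pos hε (Real.exp_pos _)
  have hEc : Continuous E := continuous_iff_continuousAt.2 fun x => (hE x).continuousAt
  by_contra! hS
  obtain ⟨i, x, hx, hxS⟩ := hS
  -- the least point of `[a, b]` at which some perturbed component fails to be positive
  set S := ⋃ i, Icc a b ∩ (fun x => u i x + E x) ⁻¹' Iic 0
  have hSc : IsClosed S := isClosed_iUnion_of_finite fun i =>
    ((hu i).add hEc.continuousOn).preimage_isClosed_of_isClosed isClosed_Icc isClosed_Iic
  obtain ⟨c, hcS, hcmin⟩ := (isCompact_Icc.of_isClosed_subset hSc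
    (iUnion_subset fun i => inter_subset_left)).exists_isLeast ⟨x, mem_iUnion.2 ⟨i, hx, hxS⟩⟩
  obtain ⟨i₀, hcI, hc0⟩ := mem_iUnion.1 hcS
  have hac : a < c := by
    refine lt_of_le_of_ne hcI.1 fun hac => ?_
    have := add_pos_of_nonneg_of_pos (ha i₀) (hEpos a)
    rw [hac] at this
    exact (not_le.2 this) hc0
  have hpos : ∀ j, ∀ x ∈ Ico a c, -E x < u j x := fun j x hx => by
    by_contra! h
    exact (hcmin (mem_iUnion.2 ⟨j, ⟨hx.1, hx.2.le.trans hcI.2⟩,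
      by simp only [mem_preimage, mem_Iic]; linarith⟩)).not_gt hx.2
  have hmono : StrictMonoOn (fun x => u i₀ x + E x) (Icc a c) := by
    refine strictMonoOn_of_deriv_pos (convex_Icc a c)
      (((hu i₀).mono (Icc_subset_Icc_right hcI.2)).add hEc.continuousOn) fun x hx => ?_
    rw [interior_Icc] at hx
    rw [((hu' i₀ x ⟨hx.1, hx.2.trans_le hcI.2⟩).fun_add (hE x)).deriv]
    exact sum_mul_add_pos_of_neg_lt (hEpos x) (hA x ⟨hx.1, hx.2.trans_le hcI.2⟩ i₀)
      (hAL x ⟨hx.1, hx.2.trans_le hcI.2⟩ i₀) fun j => hpos j x ⟨hx.1.le, hx.2⟩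
  have := hmono (left_mem_Icc.2 hac.le) (right_mem_Icc.2 hac.le) hac
  have := hpos i₀ a (left_mem_Ico.2 hac)
  simp only [mem_preimage, mem_Iic] at hc0
  linarith

theorem nonneg_of_hasDerivAt_sum_mul
    (hA : ∀ x ∈ Ioo a b, ∀ i j, 0 ≤ A x i j) (hAL : ∀ x ∈ Ioo a b, ∀ i j, A x i j ≤ L)
    (hu : ∀ i, ContinuousOn (u i) (Icc a b))
    (hu' : ∀ i, ∀ x ∈ Ioo a b, HasDerivAt (u i) (∑ j, A x i j * u j x) x)
    (ha : ∀ i, 0 ≤ u i a) : ∀ i, ∀ x ∈ Icc a b, 0 ≤ u i x := by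
  intro i x hx
  refine le_of_forall_pos_lt_add fun δ hδ => ?_
  have hexp := Real.exp_pos ((Fintype.card ι * L + 1) * (x - a))
  have := pos_add_exp_of_hasDerivAt_sum_mul hA hAL hu hu' ha (div_pos hδ hexp) i x hx
  rwa [div_mul_cancel₀ _ hexp.ne'] at this

theorem eq_zero_of_hasDerivAt_sum_mul
    (hA : ∀ x ∈ Ioo a b, ∀ i j, 0 ≤ A x i j) (hAL : ∀ x ∈ Ioo a b, ∀ i j, A x i j ≤ L)
    (hu : ∀ i, ContinuousOn (u i) (Icc a b))
    (hu' : ∀ i, ∀ x ∈ Ioo a b, HasDerivAt (u i) (∑ j, A x i j * u j x) x)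
    (ha : ∀ i, u i a = 0) : ∀ i, ∀ x ∈ Icc a b, u i x = 0 := by
  have hneg := nonneg_of_hasDerivAt_sum_mul (u := fun i x => -u i x) hA hAL
    (fun i => (hu i).neg)
    (fun i x hx => (hu' i x hx).neg.congr_deriv (by simp only [mul_neg, Finset.sum_neg_distrib]))
    (fun i => by simp [ha])
  intro i x hx
  exact le_antisymm (neg_nonneg.1 (hneg i x hx))
    (nonneg_of_hasDerivAt_sum_mul hA hAL hu hu' (fun i => (ha i).ge) i x hx)

theorem nonneg_of_hasDerivAt_neg_sum_mul
    (hA : ∀ x ∈ Ioo a b, ∀ i j, 0 ≤ A x i j) (hAL : ∀ x ∈ Ioo a b, ∀ i j, A x i j ≤ L)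
    (hu : ∀ i, ContinuousOn (u i) (Icc a b))
    (hu' : ∀ i, ∀ x ∈ Ioo a b, HasDerivAt (u i) (-∑ j, A x i j * u j x) x)
    (hb : ∀ i, 0 ≤ u i b) : ∀ i, ∀ x ∈ Icc a b, 0 ≤ u i x := by
  have hneg : ∀ {x}, x ∈ Ioo (-b) (-a) → -x ∈ Ioo a b := fun hx =>
    ⟨by linarith [hx.2], by linarith [hx.1]⟩
  have hrefl := nonneg_of_hasDerivAt_sum_mul (A := fun x => A (-x)) (u := fun i x => u i (-x))
    (fun x hx => hA (-x) (hneg hx)) (fun x hx => hAL (-x) (hneg hx))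
    (fun i => (hu i).comp continuous_neg.continuousOn fun x hx =>
      ⟨by linarith [hx.2], by linarith [hx.1]⟩)
    (fun i x hx => ((hu' i (-x) (hneg hx)).scomp x (hasDerivAt_neg x)).congr_deriv (by simp))
    (by simpa using hb)
  intro i x hx
  simpa using hrefl i (-x) ⟨by linarith [hx.2], by linarith [hx.1]⟩

end Cooperative

theorem eq_zero_of_hasDerivAt_of_eq_zero {f f' : ℝ → ℝ} {s : Set ℝ} (hs : IsOpen s)
    (hf : ∀ x ∈ s, HasDerivAt f (f' x) x) (h0 : ∀ x ∈ s, f x = 0) : ∀ x ∈ s, f' x = 0 :=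
  fun x hx => (hf x hx).unique
    ((hasDerivAt_const x 0).congr_of_eventuallyEq (eventually_of_mem (hs.mem_nhds hx) h0))

theorem neg_of_nonpos_of_hasDerivAt_of_pos {f g : ℝ → ℝ} {a b : ℝ} (hab : a < b)
    (hf : ContinuousOn f (Icc a b)) (hd : ∀ x ∈ Ioo a b, HasDerivAt f (g x) x)
    (hg : ContinuousWithinAt g (Icc a b) a) (hga : 0 < g a) (hf0 : ∀ x ∈ Icc a b, f x ≤ 0) :
    f a < 0 := by
  have hev : ∀ᶠ x in 𝓝[>] a, 0 < g x ∧ x < b :=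
    (((hg.mono_of_mem_nhdsWithin (Icc_mem_nhdsGE hab)).eventually (lt_mem_nhds hga)).filter_mono
      (nhdsWithin_mono a Ioi_subset_Ici_self)).and
      (mem_of_superset (Ioo_mem_nhdsGT hab) fun x hx => hx.2)
  obtain ⟨d, had, hsub⟩ := mem_nhdsGT_iff_exists_Ioo_subset.1 hev
  set c := (a + d) / 2
  have hc : c ∈ Ioo a d := ⟨by simp only [c]; linarith [mem_Ioi.1 had],
    by simp only [c]; linarith [mem_Ioi.1 had]⟩
  have hmono : StrictMonoOn f (Icc a c) := by
    refine strictMonoOn_of_deriv_pos (convex_Icc a c) (hf.mono (Icc_subset_Icc_right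
      (hsub hc).2.le)) fun x hx => ?_
    rw [interior_Icc] at hx
    have hxd : x ∈ Ioo a d := ⟨hx.1, hx.2.trans hc.2⟩
    rw [(hd x ⟨hx.1, (hsub hxd).2⟩).deriv]
    exact (hsub hxd).1
  exact (hmono (left_mem_Icc.2 hc.1.le) (right_mem_Icc.2 hc.1.le) hc.1).trans_le
    (hf0 c ⟨hc.1.le, (hsub hc).2.le⟩)

theorem hasDerivAt_Dv {f : ℝ → ℝ} {n : WithTop ℕ∞} (hf : ContDiffOn ℝ n f (Icc 0 1)) (hn : n ≠ 0)
    {x : ℝ} (hx : x ∈ Ioo 0 1) : HasDerivAt f (Dv f x) x :=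
  (hf.differentiableOn hn x (Ioo_subset_Icc_self hx)).hasDerivWithinAt.hasDerivAt
    (Icc_mem_nhds hx.1 hx.2)

theorem contDiffOn_Dv {f : ℝ → ℝ} {m n : WithTop ℕ∞} (hf : ContDiffOn ℝ n f (Icc 0 1))
    (hmn : m + 1 ≤ n) : ContDiffOn ℝ m (Dv f) (Icc 0 1) :=
  hf.derivWithin (uniqueDiffOn_Icc one_pos) hmn

structure IsClassicalSolution (p r y : ℝ → ℝ) : Prop where
  contDiffOn : ContDiffOn ℝ 2 y (Icc 0 1)
  contDiffOn_moment : ContDiffOn ℝ 2 (fun x => p x * Dv (Dv y) x) (Icc 0 1)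
  eq : ∀ x ∈ Icc (0:ℝ) 1, Dv (Dv fun t => p t * Dv (Dv y) t) x = r x * y x

noncomputable def beamState (p y : ℝ → ℝ) : Fin 4 → ℝ → ℝ :=
  ![y, Dv y, fun x => p x * Dv (Dv y) x, Dv fun x => p x * Dv (Dv y) x]

noncomputable def beamMatrix (p r : ℝ → ℝ) (x : ℝ) : Fin 4 → Fin 4 → ℝ :=
  ![![0, 1, 0, 0], ![0, 0, (p x)⁻¹, 0], ![0, 0, 0, 1], ![r x, 0, 0, 0]]

section Beam

variable {p r y : ℝ → ℝ}

theorem beamMatrix_nonneg {x : ℝ} (hp : 0 < p x) (hr : 0 ≤ r x) (i j : Fin 4) :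
    0 ≤ beamMatrix p r x i j := by
  fin_cases i <;> fin_cases j <;> simp [beamMatrix, hp.le, hr]

theorem exists_beamMatrix_le {s : Set ℝ} (hs : IsCompact s) (hpc : ContinuousOn p s)
    (hrc : ContinuousOn r s) (hp : ∀ x ∈ s, p x ≠ 0) :
    ∃ L, ∀ x ∈ s, ∀ i j, beamMatrix p r x i j ≤ L := by
  obtain ⟨C₁, hC₁⟩ := hs.exists_bound_of_continuousOn (hpc.inv₀ hp)
  obtain ⟨C₂, hC₂⟩ := hs.exists_bound_of_continuousOn hrc
  refine ⟨1 + |C₁| + |C₂|, fun x hx i j => ?_⟩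
  have h₁ := (le_abs_self _).trans (hC₁ x hx)
  have h₂ := (le_abs_self _).trans (hC₂ x hx)
  fin_cases i <;> fin_cases j <;> simp [beamMatrix] at h₁ h₂ ⊢ <;>
    linarith [abs_nonneg C₁, abs_nonneg C₂, le_abs_self C₁, le_abs_self C₂]

namespace IsClassicalSolution

theorem continuousOn_beamState (h : IsClassicalSolution p r y) (i : Fin 4) :
    ContinuousOn (beamState p y i) (Icc 0 1) := by
  fin_cases i
  · exact h.contDiffOn.continuousOn
  · exact (contDiffOn_Dv h.contDiffOn (m := 1) (by norm_num)).continuousOn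
  · exact h.contDiffOn_moment.continuousOn
  · exact (contDiffOn_Dv h.contDiffOn_moment (m := 1) (by norm_num)).continuousOn

theorem hasDerivAt_beamState (h : IsClassicalSolution p r y) (hp : ∀ x ∈ Icc 0 1, p x ≠ 0)
    (i : Fin 4) {x : ℝ} (hx : x ∈ Ioo 0 1) :
    HasDerivAt (beamState p y i) (∑ j, beamMatrix p r x i j * beamState p y j x) x := by
  fin_cases i
  · simpa [beamState, beamMatrix, Fin.sum_univ_four]
      using hasDerivAt_Dv h.contDiffOn two_ne_zero hx
  · simpa [beamState, beamMatrix, Fin.sum_univ_four, hp x (Ioo_subset_Icc_self hx)]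
      using hasDerivAt_Dv (contDiffOn_Dv h.contDiffOn (m := 1) (by norm_num)) one_ne_zero hx
  · simpa [beamState, beamMatrix, Fin.sum_univ_four]
      using hasDerivAt_Dv h.contDiffOn_moment two_ne_zero hx
  · simpa [beamState, beamMatrix, Fin.sum_univ_four, h.eq x (Ioo_subset_Icc_self hx)]
      using hasDerivAt_Dv (contDiffOn_Dv h.contDiffOn_moment (m := 1) (by norm_num)) one_ne_zero hx

theorem hasDerivAt_signed_beamState (h : IsClassicalSolution p r y)
    (hp : ∀ x ∈ Icc 0 1, p x ≠ 0) (i : Fin 4) {x : ℝ} (hx : x ∈ Ioo 0 1) :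
    HasDerivAt (fun x => (-1) ^ (i : ℕ) * beamState p y i x)
      (-∑ j, beamMatrix p r x i j * ((-1) ^ (j : ℕ) * beamState p y j x)) x :=
  ((h.hasDerivAt_beamState hp i hx).const_mul _).congr_deriv (by
    fin_cases i <;> simp [beamMatrix, Fin.sum_univ_four] <;> ring)

theorem signs_on_Icc_of_signs_at (h : IsClassicalSolution p r y) (hpc : ContinuousOn p (Icc 0 1))
    (hrc : ContinuousOn r (Icc 0 1)) (hp : ∀ x ∈ Icc (0:ℝ) 1, 0 < p x)
    (hr : ∀ x ∈ Icc (0:ℝ) 1, 0 ≤ r x) {a : ℝ} (ha0 : 0 ≤ a) (ha1 : a ≤ 1)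
    (h1 : 0 ≤ y a) (h2 : Dv y a ≤ 0) (h3 : 0 ≤ Dv (Dv y) a)
    (h4 : Dv (fun t => p t * Dv (Dv y) t) a ≤ 0) :
    ∀ x ∈ Icc 0 a, 0 ≤ y x ∧ Dv y x ≤ 0 ∧ 0 ≤ p x * Dv (Dv y) x ∧
      Dv (fun t => p t * Dv (Dv y) t) x ≤ 0 := by
  have hsub : Ioo 0 a ⊆ Icc (0:ℝ) 1 := Ioo_subset_Icc_self.trans (Icc_subset_Icc_right ha1)
  obtain ⟨L, hL⟩ := exists_beamMatrix_le isCompact_Icc hpc hrc fun x hx => (hp x hx).ne'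
  have hsign := nonneg_of_hasDerivAt_neg_sum_mul (A := beamMatrix p r)
    (fun x hx => beamMatrix_nonneg (hp x (hsub hx)) (hr x (hsub hx)))
    (fun x hx => hL x (hsub hx))
    (fun i => ((h.continuousOn_beamState i).mono (Icc_subset_Icc_right ha1)).const_mul _)
    (fun i x hx => h.hasDerivAt_signed_beamState (fun x hx => (hp x hx).ne') i
      (Ioo_subset_Ioo_right ha1 hx))
    fun i => by fin_cases i <;> simp [beamState] <;> nlinarith [hp a ⟨ha0, ha1⟩]
  intro x hx
  have hy := hsign 0 x hx
  have hy' := hsign 1 x hx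
  have hw := hsign 2 x hx
  have hw' := hsign 3 x hx
  norm_num [beamState] at hy hy' hw hw'
  exact ⟨hy, hy', hw, hw'⟩

theorem eq_zero_of_eq_zero_Icc (h : IsClassicalSolution p r y)
    (hpc : ContinuousOn p (Icc 0 1)) (hrc : ContinuousOn r (Icc 0 1))
    (hp : ∀ x ∈ Icc (0:ℝ) 1, 0 < p x) (hr : ∀ x ∈ Icc (0:ℝ) 1, 0 ≤ r x) {t : ℝ} (ht : 0 < t)
    (ht1 : t ≤ 1) (hzero : ∀ x ∈ Icc 0 t, y x = 0) : ∀ x ∈ Icc 0 1, y x = 0 := by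
  have hsub : Ioo 0 t ⊆ Ioo (0:ℝ) 1 := Ioo_subset_Ioo_right ht1
  have hy' : ∀ x ∈ Ioo 0 t, Dv y x = 0 := eq_zero_of_hasDerivAt_of_eq_zero isOpen_Ioo
    (fun x hx => hasDerivAt_Dv h.contDiffOn two_ne_zero (hsub hx))
    (fun x hx => hzero x (Ioo_subset_Icc_self hx))
  have hy'' : ∀ x ∈ Ioo 0 t, Dv (Dv y) x = 0 := eq_zero_of_hasDerivAt_of_eq_zero isOpen_Ioo
    (fun x hx => hasDerivAt_Dv (contDiffOn_Dv h.contDiffOn (m := 1) (by norm_num)) one_ne_zero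
      (hsub hx)) hy'
  have hw' : ∀ x ∈ Ioo 0 t, Dv (fun x => p x * Dv (Dv y) x) x = 0 :=
    eq_zero_of_hasDerivAt_of_eq_zero isOpen_Ioo
      (fun x hx => hasDerivAt_Dv h.contDiffOn_moment two_ne_zero (hsub hx))
      (fun x hx => by simp [hy'' x hx])
  -- the whole state vanishes at `t / 2`, so it vanishes on `[t / 2, 1]`
  have hmid : t / 2 ∈ Ioo 0 t := ⟨by linarith, by linarith⟩
  have hsub' : Ioo (t / 2) 1 ⊆ Icc (0:ℝ) 1 := fun x hx => ⟨by linarith [hx.1], hx.2.le⟩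
  obtain ⟨L, hL⟩ := exists_beamMatrix_le isCompact_Icc hpc hrc fun x hx => (hp x hx).ne'
  have hright := eq_zero_of_hasDerivAt_sum_mul (A := beamMatrix p r)
    (fun x hx => beamMatrix_nonneg (hp x (hsub' hx)) (hr x (hsub' hx)))
    (fun x hx => hL x (hsub' hx))
    (fun i => (h.continuousOn_beamState i).mono (Icc_subset_Icc_left (by linarith)))
    (fun i x hx => h.hasDerivAt_beamState (fun x hx => (hp x hx).ne') i
      ⟨by linarith [hx.1], hx.2⟩)
    (fun i => by
      fin_cases i <;> simp [beamState, hzero _ (Ioo_subset_Icc_self hmid), hy' _ hmid,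
        hy'' _ hmid, hw' _ hmid])
  intro x hx
  rcases le_total x t with hxt | hxt
  · exact hzero x ⟨hx.1, hxt⟩
  · exact hright 0 x ⟨by linarith, hx.2⟩

theorem apply_zero_pos (h : IsClassicalSolution p r y)
    (hpc : ContinuousOn p (Icc 0 1)) (hrc : ContinuousOn r (Icc 0 1))
    (hp : ∀ x ∈ Icc (0:ℝ) 1, 0 < p x) (hr : ∀ x ∈ Icc (0:ℝ) 1, 0 ≤ r x)
    (hnt : ∃ x ∈ Icc (0:ℝ) 1, y x ≠ 0) {a : ℝ} (ha0 : 0 < a) (ha1 : a ≤ 1)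
    (hy : ∀ x ∈ Icc 0 a, 0 ≤ y x) (hy' : ∀ x ∈ Icc 0 a, Dv y x ≤ 0) : 0 < y 0 := by
  refine (hy 0 ⟨le_rfl, ha0.le⟩).lt_of_ne' fun hy0 => ?_
  have hanti : AntitoneOn y (Icc 0 a) := by
    have hd : ∀ x ∈ Ioo 0 a, HasDerivAt y (Dv y x) x := fun x hx =>
      hasDerivAt_Dv h.contDiffOn two_ne_zero (Ioo_subset_Ioo_right ha1 hx)
    refine antitoneOn_of_deriv_nonpos (convex_Icc 0 a)
      (h.contDiffOn.continuousOn.mono (Icc_subset_Icc_right ha1))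
      (fun x hx => ?_) fun x hx => ?_
    · rw [interior_Icc] at hx
      exact (hd x hx).differentiableAt.differentiableWithinAt
    · rw [interior_Icc] at hx
      exact (hd x hx).deriv ▸ hy' x (Ioo_subset_Icc_self hx)
  obtain ⟨x, hx, hyx⟩ := hnt
  exact hyx (h.eq_zero_of_eq_zero_Icc hpc hrc hp hr ha0 ha1 (fun x hx => le_antisymm
    (hy0 ▸ hanti ⟨le_rfl, ha0.le⟩ hx hx.1) (hy x hx)) x hx)

theorem strict_signs_at_zero (h : IsClassicalSolution p r y)
    (hrc : ContinuousWithinAt r (Icc 0 1) 0)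
    (hp : 0 < p 0) (hr : 0 < r 0) {a : ℝ} (ha0 : 0 < a) (ha1 : a ≤ 1) (hy0 : 0 < y 0)
    (hsign : ∀ x ∈ Icc 0 a, Dv y x ≤ 0 ∧ 0 ≤ p x * Dv (Dv y) x ∧
      Dv (fun t => p t * Dv (Dv y) t) x ≤ 0) :
    Dv y 0 < 0 ∧ 0 < Dv (Dv y) 0 ∧ Dv (fun t => p t * Dv (Dv y) t) 0 < 0 := by
  have hsub : Icc 0 a ⊆ Icc (0:ℝ) 1 := Icc_subset_Icc_right ha1
  have hIoo : Ioo 0 a ⊆ Ioo (0:ℝ) 1 := Ioo_subset_Ioo_right ha1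
  have h0 : (0:ℝ) ∈ Icc 0 a := ⟨le_rfl, ha0.le⟩
  have hy'C1 := contDiffOn_Dv h.contDiffOn (m := 1) (by norm_num)
  have hw'C1 := contDiffOn_Dv h.contDiffOn_moment (m := 1) (by norm_num)
  have hw' : Dv (fun t => p t * Dv (Dv y) t) 0 < 0 :=
    neg_of_nonpos_of_hasDerivAt_of_pos ha0 (hw'C1.continuousOn.mono hsub)
      (fun x hx => (hasDerivAt_Dv hw'C1 one_ne_zero (hIoo hx)).congr_deriv
        (h.eq x (Ioo_subset_Icc_self (hIoo hx))))
      ((hrc.mul (h.contDiffOn.continuousOn 0 (hsub h0))).mono hsub) (mul_pos hr hy0)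
      fun x hx => (hsign x hx).2.2
  have hw : 0 < p 0 * Dv (Dv y) 0 := neg_neg_iff_pos.1 <|
    neg_of_nonpos_of_hasDerivAt_of_pos (f := fun x => -(p x * Dv (Dv y) x))
      (g := fun x => -Dv (fun t => p t * Dv (Dv y) t) x) ha0
      (h.contDiffOn_moment.continuousOn.mono hsub).neg
      (fun x hx => (hasDerivAt_Dv h.contDiffOn_moment two_ne_zero (hIoo hx)).neg)
      ((hw'C1.continuousOn.mono hsub).neg 0 h0) (neg_pos.2 hw')
      fun x hx => neg_nonpos.2 (hsign x hx).2.1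
  have hy'' : 0 < Dv (Dv y) 0 := pos_of_mul_pos_right hw hp.le
  refine ⟨neg_of_nonpos_of_hasDerivAt_of_pos ha0 (hy'C1.continuousOn.mono hsub)
    (fun x hx => hasDerivAt_Dv hy'C1 one_ne_zero (hIoo hx))
    (((contDiffOn_Dv hy'C1 (m := 0) (by norm_num)).continuousOn.mono hsub) 0 h0) hy''
    fun x hx => (hsign x hx).1, hy'', hw'⟩

end IsClassicalSolution

end Beam

theorem stmt_1 (p r y : ℝ → ℝ)
    (hpc : ContinuousOn p (Icc 0 1)) (hrc : ContinuousOn r (Icc 0 1))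
    (hp : ∀ x ∈ Icc (0:ℝ) 1, 0 < p x) (hr : ∀ x ∈ Icc (0:ℝ) 1, 0 < r x)
    (hy : ContDiffOn ℝ 2 y (Icc 0 1))
    (hpy : ContDiffOn ℝ 2 (fun x => p x * Dv (Dv y) x) (Icc 0 1))
    (heq : ∀ x ∈ Icc (0:ℝ) 1, Dv (Dv (fun t => p t * Dv (Dv y) t)) x = r x * y x)
    (hnt : ∃ x ∈ Icc (0:ℝ) 1, y x ≠ 0)
    (a : ℝ) (ha : a ∈ Ioc (0:ℝ) 1)
    (h1 : 0 ≤ y a) (h2 : Dv y a ≤ 0) (h3 : 0 ≤ Dv (Dv y) a)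
    (h4 : Dv (fun t => p t * Dv (Dv y) t) a ≤ 0) :
    0 < y 0 ∧ Dv y 0 < 0 ∧ 0 < Dv (Dv y) 0 ∧
      Dv (fun t => p t * Dv (Dv y) t) 0 < 0 := by
  obtain ⟨ha0, ha1⟩ := ha
  have hsol : IsClassicalSolution p r y := ⟨hy, hpy, heq⟩
  have h0 : (0:ℝ) ∈ Icc 0 1 := ⟨le_rfl, zero_le_one⟩
  have hr₀ : ∀ x ∈ Icc (0:ℝ) 1, 0 ≤ r x := fun x hx => (hr x hx).le
  have hsign := hsol.signs_on_Icc_of_signs_at hpc hrc hp hr₀ ha0.le ha1 h1 h2 h3 h4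
  have hy0 : 0 < y 0 := hsol.apply_zero_pos hpc hrc hp hr₀ hnt ha0 ha1
    (fun x hx => (hsign x hx).1) fun x hx => (hsign x hx).2.1
  exact ⟨hy0, hsol.strict_signs_at_zero (hrc 0 h0) (hp 0 h0) (hr 0 h0) ha0 ha1 hy0
    fun x hx => (hsign x hx).2⟩
end

section
/- Let p, r : [0,1] → ℝ be continuous with p(x) > 0 and r(x) > 0 for all x ∈ [0,1], let α ∈ ℝ, and let λ > 0. If y₁ and y₂ are nontrivial classical solutions of (p·y'')'' = λ·r·y on [0,1] both satisfying y(0) = y'(0) = y'(1) = 0 and (p·y'')'(1) + λ·α·y(1) = 0, then y₁ and y₂ are linearly dependent (i.e. the positive eigenvalue λ has geometric multiplicity 1). -/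
/-!
Write `q = p z''`. A solution of `(p z'')'' = w z` with `w ≥ 0` and `z(0) = z'(0) = 0` is
determined by `z''(0)` and `q'(0)`. If `z''(0) = 0` and `q'(0) > 0`, then `q'` stays positive on
`[0, 1]`: while `q' > 0`, positivity passes down the chain `q' → q → z'' = q / p → z' → z` (each
function after the first vanishes at `0`), and `q'' = w z ≥ 0` then keeps `q' ≥ q'(0)`. In
particular `z'(1) > 0`, and symmetrically `z'(1) < 0` if `q'(0) < 0`. If `z''(0) = q'(0) = 0`,
Grönwall's inequality gives `z = 0`. Hence `z(0) = z'(0) = z''(0) = z'(1) = 0` forces `z = 0`,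
and for two eigenfunctions this applies to `y₂''(0) y₁ - y₁''(0) y₂`.
-/

open Set

/-- `y` is not identically zero on `[0,1]`. -/
def Nontriv (y : ℝ → ℝ) : Prop := ∃ x ∈ Set.Icc (0:ℝ) 1, y x ≠ 0

/-- `y` is a classical solution of `(p y'')'' = lam * r * y` on `[0,1]`. -/
def SolS (p r : ℝ → ℝ) (lam : ℝ) (y : ℝ → ℝ) : Prop :=
  ContDiffOn ℝ 2 y (Set.Icc 0 1) ∧
  ContDiffOn ℝ 2 (fun x => p x * Dv (Dv y) x) (Set.Icc 0 1) ∧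
  ∀ x ∈ Set.Icc (0:ℝ) 1,
    Dv (Dv (fun t => p t * Dv (Dv y) t)) x = lam * (r x * y x)

/-- Clamped boundary conditions `y(0) = y'(0) = y(1) = y'(1) = 0`. -/
def BC1 (y : ℝ → ℝ) : Prop := y 0 = 0 ∧ Dv y 0 = 0 ∧ y 1 = 0 ∧ Dv y 1 = 0

/-- Boundary conditions `y(0) = y'(0) = y'(1) = 0`, `(p y'')'(1) + lam * alpha * y(1) = 0`. -/
def BC2S (p : ℝ → ℝ) (lam alpha : ℝ) (y : ℝ → ℝ) : Prop :=
  y 0 = 0 ∧ Dv y 0 = 0 ∧ Dv y 1 = 0 ∧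
  Dv (fun t => p t * Dv (Dv y) t) 1 + lam * alpha * y 1 = 0

/-- Linear dependence of two functions on `[0,1]`. -/
def LinDep (y₁ y₂ : ℝ → ℝ) : Prop :=
  ∃ a b : ℝ, (a ≠ 0 ∨ b ≠ 0) ∧ ∀ x ∈ Set.Icc (0:ℝ) 1, a * y₁ x + b * y₂ x = 0

section Calculus

variable {f f' : ℝ → ℝ} {s : Set ℝ} {a b : ℝ}

lemma strictMonoOn_Icc_of_hasDerivWithinAt_pos (hab : Icc a b ⊆ s)
    (hf : ∀ t ∈ s, HasDerivWithinAt f (f' t) s t) (hf' : ∀ t ∈ Ioo a b, 0 < f' t) :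
    StrictMonoOn f (Icc a b) := by
  refine strictMonoOn_of_hasDerivWithinAt_pos (convex_Icc a b)
    (fun t ht => (hf t (hab ht)).continuousWithinAt.mono hab) (fun t ht => ?_)
    (by rwa [interior_Icc])
  rw [interior_Icc] at ht ⊢
  exact (hf t (hab (Ioo_subset_Icc_self ht))).mono (Ioo_subset_Icc_self.trans hab)

lemma monotoneOn_Icc_of_hasDerivWithinAt_nonneg (hab : Icc a b ⊆ s)
    (hf : ∀ t ∈ s, HasDerivWithinAt f (f' t) s t) (hf' : ∀ t ∈ Ioo a b, 0 ≤ f' t) :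
    MonotoneOn f (Icc a b) := by
  refine monotoneOn_of_hasDerivWithinAt_nonneg (convex_Icc a b)
    (fun t ht => (hf t (hab ht)).continuousWithinAt.mono hab) (fun t ht => ?_)
    (by rwa [interior_Icc])
  rw [interior_Icc] at ht ⊢
  exact (hf t (hab (Ioo_subset_Icc_self ht))).mono (Ioo_subset_Icc_self.trans hab)

lemma pos_of_hasDerivWithinAt_pos (hab : Icc a b ⊆ s)
    (hf : ∀ t ∈ s, HasDerivWithinAt f (f' t) s t) (hf' : ∀ t ∈ Ioo a b, 0 < f' t)
    (ha : f a = 0) : ∀ t ∈ Ioc a b, 0 < f t := by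
  intro t ht
  rw [← ha]
  exact strictMonoOn_Icc_of_hasDerivWithinAt_pos hab hf hf'
    (left_mem_Icc.2 (ht.1.le.trans ht.2)) (Ioc_subset_Icc_self ht) ht.1

lemma forall_pos_of_forall_Ico_pos (hf : ContinuousOn f (Icc a b)) (ha : 0 < f a)
    (hstep : ∀ τ ∈ Ioc a b, (∀ t ∈ Ico a τ, 0 < f t) → 0 < f τ) :
    ∀ x ∈ Icc a b, 0 < f x := by
  by_contra! ⟨x, hx, hfx⟩
  set Z := Icc a b ∩ f ⁻¹' Iic 0
  have hZ : IsClosed Z := hf.preimage_isClosed_of_isClosed isClosed_Icc isClosed_Iic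
  have hZbdd : BddBelow Z := ⟨a, fun y hy => hy.1.1⟩
  obtain ⟨⟨haτ, hτb⟩, hfτ⟩ := hZ.csInf_mem ⟨x, hx, hfx⟩ hZbdd
  have hτ : a < sInf Z := haτ.lt_of_ne fun h => (h ▸ ha).not_ge hfτ
  refine (hstep _ ⟨hτ, hτb⟩ fun t ht => ?_).not_ge hfτ
  by_contra! hft
  exact (csInf_le hZbdd ⟨⟨ht.1, ht.2.le.trans hτb⟩, hft⟩).not_gt ht.2

end Calculus

/-- `(z, z₁, z₂, q, q₁)` plays the role of `(z, z', z'', p z'', (p z'')')` for a solution of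
`(p z'')'' = w z`, with all derivatives taken within `[0, 1]`. -/
structure BeamSystem (p w z z₁ z₂ q q₁ : ℝ → ℝ) : Prop where
  deriv_z : ∀ t ∈ Icc (0:ℝ) 1, HasDerivWithinAt z (z₁ t) (Icc 0 1) t
  deriv_z₁ : ∀ t ∈ Icc (0:ℝ) 1, HasDerivWithinAt z₁ (z₂ t) (Icc 0 1) t
  q_eq : ∀ t ∈ Icc (0:ℝ) 1, q t = p t * z₂ t
  deriv_q : ∀ t ∈ Icc (0:ℝ) 1, HasDerivWithinAt q (q₁ t) (Icc 0 1) t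
  deriv_q₁ : ∀ t ∈ Icc (0:ℝ) 1, HasDerivWithinAt q₁ (w t * z t) (Icc 0 1) t

lemma SolS.beamSystem {p r : ℝ → ℝ} {lam : ℝ} {y : ℝ → ℝ} (h : SolS p r lam y) :
    BeamSystem p (fun t => lam * r t) y (Dv y) (Dv (Dv y)) (fun t => p t * Dv (Dv y) t)
      (Dv fun t => p t * Dv (Dv y) t) := by
  obtain ⟨hy, hq, heq⟩ := h
  have hI : UniqueDiffOn ℝ (Icc (0:ℝ) 1) := uniqueDiffOn_Icc one_pos
  have h12 : (1 : WithTop ℕ∞) + 1 ≤ 2 := by norm_num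
  have hy' := (hy.derivWithin hI h12).differentiableOn one_ne_zero
  have hq' := (hq.derivWithin hI h12).differentiableOn one_ne_zero
  refine ⟨fun t ht => (hy.differentiableOn (by norm_num) t ht).hasDerivWithinAt,
    fun t ht => (hy' t ht).hasDerivWithinAt, fun t _ => rfl,
    fun t ht => (hq.differentiableOn (by norm_num) t ht).hasDerivWithinAt, fun t ht => ?_⟩
  have : HasDerivWithinAt (Dv _) (Dv (Dv _) t) _ t := (hq' t ht).hasDerivWithinAt
  rwa [heq t ht, ← mul_assoc] at this

namespace BeamSystem

variable {p w z z₁ z₂ q q₁ v v₁ v₂ u u₁ : ℝ → ℝ}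

lemma const_mul (S : BeamSystem p w z z₁ z₂ q q₁) (c : ℝ) :
    BeamSystem p w (fun t => c * z t) (fun t => c * z₁ t) (fun t => c * z₂ t)
      (fun t => c * q t) (fun t => c * q₁ t) where
  deriv_z t ht := (S.deriv_z t ht).const_mul c
  deriv_z₁ t ht := (S.deriv_z₁ t ht).const_mul c
  q_eq t ht := by rw [S.q_eq t ht]; ring
  deriv_q t ht := (S.deriv_q t ht).const_mul c
  deriv_q₁ t ht := by simpa only [mul_left_comm] using (S.deriv_q₁ t ht).const_mul c

lemma add (S : BeamSystem p w z z₁ z₂ q q₁) (T : BeamSystem p w v v₁ v₂ u u₁) :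
    BeamSystem p w (fun t => z t + v t) (fun t => z₁ t + v₁ t) (fun t => z₂ t + v₂ t)
      (fun t => q t + u t) (fun t => q₁ t + u₁ t) where
  deriv_z t ht := (S.deriv_z t ht).add (T.deriv_z t ht)
  deriv_z₁ t ht := (S.deriv_z₁ t ht).add (T.deriv_z₁ t ht)
  q_eq t ht := by rw [S.q_eq t ht, T.q_eq t ht, mul_add]
  deriv_q t ht := (S.deriv_q t ht).add (T.deriv_q t ht)
  deriv_q₁ t ht := by rw [mul_add]; exact (S.deriv_q₁ t ht).add (T.deriv_q₁ t ht)

section Positivity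

variable (S : BeamSystem p w z z₁ z₂ q q₁) (hp : ∀ t ∈ Icc (0:ℝ) 1, 0 < p t)
  (hw : ∀ t ∈ Icc (0:ℝ) 1, 0 ≤ w t) (hz : z 0 = 0) (hz₁ : z₁ 0 = 0) (hz₂ : z₂ 0 = 0)
include S hp hw hz hz₁ hz₂

lemma pos_of_forall_Ico_q₁_pos {τ : ℝ} (hτ : τ ∈ Ioc (0:ℝ) 1)
    (hq₁ : ∀ t ∈ Ico 0 τ, 0 < q₁ t) : 0 < z₁ τ ∧ 0 < q₁ τ := by
  have hsub : Icc 0 τ ⊆ Icc (0:ℝ) 1 := Icc_subset_Icc_right hτ.2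
  have hq0 : q 0 = 0 := by rw [S.q_eq 0 ⟨le_rfl, zero_le_one⟩, hz₂, mul_zero]
  have hq := pos_of_hasDerivWithinAt_pos hsub S.deriv_q
    (fun t ht => hq₁ t (Ioo_subset_Ico_self ht)) hq0
  have hz₂pos : ∀ t ∈ Ioc 0 τ, 0 < z₂ t := fun t ht =>
    have ht' := hsub (Ioc_subset_Icc_self ht)
    pos_of_mul_pos_right (S.q_eq t ht' ▸ hq t ht) (hp t ht').le
  have hz₁pos := pos_of_hasDerivWithinAt_pos hsub S.deriv_z₁
    (fun t ht => hz₂pos t (Ioo_subset_Ioc_self ht)) hz₁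
  have hzpos := pos_of_hasDerivWithinAt_pos hsub S.deriv_z
    (fun t ht => hz₁pos t (Ioo_subset_Ioc_self ht)) hz
  have hq₁mono : MonotoneOn q₁ (Icc 0 τ) :=
    monotoneOn_Icc_of_hasDerivWithinAt_nonneg hsub S.deriv_q₁ fun t ht =>
      mul_nonneg (hw t (hsub (Ioo_subset_Icc_self ht))) (hzpos t (Ioo_subset_Ioc_self ht)).le
  refine ⟨hz₁pos τ ⟨hτ.1, le_rfl⟩, (hq₁ 0 ⟨le_rfl, hτ.1⟩).trans_le ?_⟩
  exact hq₁mono (left_mem_Icc.2 hτ.1.le) (right_mem_Icc.2 hτ.1.le) hτ.1.le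

lemma z₁_one_pos (hq₁ : 0 < q₁ 0) : 0 < z₁ 1 := by
  have hq₁pos : ∀ t ∈ Icc (0:ℝ) 1, 0 < q₁ t :=
    forall_pos_of_forall_Ico_pos (fun t ht => (S.deriv_q₁ t ht).continuousWithinAt) hq₁
      fun τ hτ h => (S.pos_of_forall_Ico_q₁_pos hp hw hz hz₁ hz₂ hτ h).2
  exact (S.pos_of_forall_Ico_q₁_pos hp hw hz hz₁ hz₂ ⟨one_pos, le_rfl⟩
    fun t ht => hq₁pos t (Ico_subset_Icc_self ht)).1

end Positivity

lemma eq_zero_of_initial_eq_zero (S : BeamSystem p w z z₁ z₂ q q₁)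
    (hpc : ContinuousOn p (Icc 0 1)) (hwc : ContinuousOn w (Icc 0 1))
    (hp : ∀ t ∈ Icc (0:ℝ) 1, 0 < p t) (hz : z 0 = 0) (hz₁ : z₁ 0 = 0) (hz₂ : z₂ 0 = 0)
    (hq₁ : q₁ 0 = 0) : ∀ t ∈ Icc (0:ℝ) 1, z t = 0 := by
  obtain ⟨C, hC⟩ := isCompact_Icc.exists_bound_of_continuousOn
    ((hpc.inv₀ fun t ht => (hp t ht).ne').prodMk hwc)
  set K := max 1 C
  set f : ℝ → ℝ × ℝ × ℝ × ℝ := fun t => (z t, z₁ t, q t, q₁ t)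
  have hf : ∀ t ∈ Icc (0:ℝ) 1,
      HasDerivWithinAt f (z₁ t, z₂ t, q₁ t, w t * z t) (Icc 0 1) t := fun t ht =>
    (S.deriv_z t ht).prodMk <|
      (S.deriv_z₁ t ht).prodMk <| (S.deriv_q t ht).prodMk (S.deriv_q₁ t ht)
  have hbound : ∀ t ∈ Ico (0:ℝ) 1, ‖(z₁ t, z₂ t, q₁ t, w t * z t)‖ ≤ K * ‖f t‖ := by
    intro t ht
    have ht' := Ico_subset_Icc_self ht
    obtain ⟨hzf, hz₁f, hqf, hq₁f⟩ :
        ‖z t‖ ≤ ‖f t‖ ∧ ‖z₁ t‖ ≤ ‖f t‖ ∧ ‖q t‖ ≤ ‖f t‖ ∧ ‖q₁ t‖ ≤ ‖f t‖ := by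
      simp only [f, Prod.norm_def]
      refine ⟨?_, ?_, ?_, ?_⟩ <;> simp
    obtain ⟨hpC, hwC⟩ := norm_prod_le_iff.1 (hC t ht')
    have hz₂t : z₂ t = (p t)⁻¹ * q t := by
      rw [S.q_eq t ht', inv_mul_cancel_left₀ (hp t ht').ne']
    have hK1 : 1 ≤ K := le_max_left _ _
    have hKC : C ≤ K := le_max_right _ _
    simp only [norm_prod_le_iff, hz₂t, norm_mul]
    refine ⟨?_, ?_, ?_, ?_⟩
    · nlinarith [norm_nonneg (f t)]
    · gcongr; exact hpC.trans hKC
    · nlinarith [norm_nonneg (f t)]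
    · gcongr; exact hwC.trans hKC
  have hf0 : f 0 = 0 := by
    simp [f, hz, hz₁, hq₁, S.q_eq 0 ⟨le_rfl, zero_le_one⟩, hz₂]
  intro t ht
  exact congrArg Prod.fst (eq_zero_of_abs_deriv_le_mul_abs_self_of_eq_zero_right
    (fun t ht => (hf t ht).continuousWithinAt)
    (fun t ht =>
      (hf t (Ico_subset_Icc_self ht)).mono_of_mem_nhdsWithin (Icc_mem_nhdsGE_of_mem ht))
    hf0 hbound t ht)

lemma eq_zero_of_z₁_one_eq_zero (S : BeamSystem p w z z₁ z₂ q q₁)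
    (hpc : ContinuousOn p (Icc 0 1)) (hwc : ContinuousOn w (Icc 0 1))
    (hp : ∀ t ∈ Icc (0:ℝ) 1, 0 < p t) (hw : ∀ t ∈ Icc (0:ℝ) 1, 0 ≤ w t)
    (hz : z 0 = 0) (hz₁ : z₁ 0 = 0) (hz₂ : z₂ 0 = 0) (h1 : z₁ 1 = 0) :
    ∀ t ∈ Icc (0:ℝ) 1, z t = 0 := by
  rcases lt_trichotomy (q₁ 0) 0 with hneg | hzero | hpos
  · have := (S.const_mul (-1)).z₁_one_pos hp hw (by simp [hz]) (by simp [hz₁]) (by simp [hz₂])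
      (by simpa using hneg)
    simp [h1] at this
  · exact S.eq_zero_of_initial_eq_zero hpc hwc hp hz hz₁ hz₂ hzero
  · exact absurd h1 (S.z₁_one_pos hp hw hz hz₁ hz₂ hpos).ne'

end BeamSystem

theorem stmt_4_general (p r : ℝ → ℝ) (alpha lam : ℝ)
    (hpc : ContinuousOn p (Icc 0 1)) (hrc : ContinuousOn r (Icc 0 1))
    (hp : ∀ x ∈ Icc (0:ℝ) 1, 0 < p x) (hr : ∀ x ∈ Icc (0:ℝ) 1, 0 < r x)
    (hlam : 0 < lam) (y₁ y₂ : ℝ → ℝ)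
    (hy₁ : SolS p r lam y₁) (hbc₁ : BC2S p lam alpha y₁)
    (hy₂ : SolS p r lam y₂) (hbc₂ : BC2S p lam alpha y₂) :
    LinDep y₁ y₂ := by
  have hw : ∀ t ∈ Icc (0:ℝ) 1, 0 ≤ lam * r t := fun t ht => mul_nonneg hlam.le (hr t ht).le
  have hwc : ContinuousOn (fun t => lam * r t) (Icc 0 1) := continuousOn_const.mul hrc
  obtain ⟨h₁0, h₁0', h₁1', -⟩ := hbc₁
  obtain ⟨h₂0, h₂0', h₂1', -⟩ := hbc₂
  by_cases hc₂ : Dv (Dv y₂) 0 = 0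
  · have hy₂0 := hy₂.beamSystem.eq_zero_of_z₁_one_eq_zero hpc hwc hp hw h₂0 h₂0' hc₂ h₂1'
    exact ⟨0, 1, by simp, fun x hx => by simp [hy₂0 x hx]⟩
  · have S := (hy₁.beamSystem.const_mul (Dv (Dv y₂) 0)).add
      (hy₂.beamSystem.const_mul (-Dv (Dv y₁) 0))
    refine ⟨_, _, Or.inl hc₂, S.eq_zero_of_z₁_one_eq_zero hpc hwc hp hw ?_ ?_ ?_ ?_⟩
    · simp [h₁0, h₂0]
    · simp [h₁0', h₂0']
    · ring
    · simp [h₁1', h₂1']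

theorem stmt_4 (p r : ℝ → ℝ) (alpha lam : ℝ)
    (hpc : ContinuousOn p (Icc 0 1)) (hrc : ContinuousOn r (Icc 0 1))
    (hp : ∀ x ∈ Icc (0:ℝ) 1, 0 < p x) (hr : ∀ x ∈ Icc (0:ℝ) 1, 0 < r x)
    (hlam : 0 < lam) (y₁ y₂ : ℝ → ℝ)
    (hy₁ : SolS p r lam y₁) (hnt₁ : Nontriv y₁) (hbc₁ : BC2S p lam alpha y₁)
    (hy₂ : SolS p r lam y₂) (hnt₂ : Nontriv y₂) (hbc₂ : BC2S p lam alpha y₂) :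
    LinDep y₁ y₂ :=
  stmt_4_general p r alpha lam hpc hrc hp hr hlam y₁ y₂ hy₁ hbc₁ hy₂ hbc₂
end

section
/- Let p, r : [0,1] → ℝ be continuous with p(x) > 0 and r(x) > 0 for all x ∈ [0,1], let α ≥ 0, and let f : [0,1] → ℝ be continuous. Let y ∈ C²([0,1],ℝ) with p·y'' ∈ C²([0,1],ℝ) satisfy (p·y'')''(x) = r(x)·f(x) for all x ∈ [0,1] and the boundary conditions y(0) = y'(0) = y'(1) = 0 and (p·y'')'(1) + α·f(1) = 0. If y has at least n sign changes on (0,1), then f has at least n sign changes on (0,1). -/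
/-!
By the mean value theorem a derivative keeps all sign changes of a function but one, and a
boundary zero of the function gives that one back. So `y(0) = 0` leaves `y'` with `n` sign
changes, `y'(0) = y'(1) = 0` give `y''`, hence `w = p y''`, `n + 1` of them, and `w'` has `n`.
At the right end `w'(1) = -α f(1)` has, when nonzero, the sign opposite to `w''(1) = r(1) f(1)`;
this yields one more sign of `w'' = r f` after the last one, by the mean value theorem on
`[s, 1]` if `w'(1)` does not share the sign of `w'` at the last point `s`, and otherwise by
continuity of `w''` at `1`.
-/

open Set

/-- `g` has at least `n` sign changes on `(0,1)`: there exist points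
`0 < x₁ < … < x_{n+1} < 1` with `g(x_k) * g(x_{k+1}) < 0` for all `k`. -/
def SignChanges (g : ℝ → ℝ) (n : ℕ) : Prop :=
  ∃ x : Fin (n + 1) → ℝ, StrictMono x ∧ (∀ k, x k ∈ Set.Ioo (0:ℝ) 1) ∧
    ∀ k : Fin n, g (x k.castSucc) * g (x k.succ) < 0

open Filter Topology

def AltSign (g : ℝ → ℝ) (ε : ℝ) (s : ℕ → ℝ) (m : ℕ) : Prop :=
  (∀ i < m, s i ∈ Ioo 0 1 ∧ 0 < (-1) ^ i * ε * g (s i)) ∧ ∀ i, i + 1 < m → s i < s (i + 1)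

/-- Boundary points where `g` vanishes are allowed here, which is how the boundary conditions
enter: the increments of `g` between consecutive points still alternate in sign. -/
def WeakAltSign (g : ℝ → ℝ) (ε : ℝ) (a : ℕ → ℝ) (m : ℕ) : Prop :=
  (∀ i ≤ m, a i ∈ Icc 0 1 ∧ 0 ≤ (-1) ^ i * ε * g (a i)) ∧
    ∀ i < m, a i < a (i + 1) ∧
      (0 < (-1) ^ i * ε * g (a i) ∨ 0 < (-1) ^ (i + 1) * ε * g (a (i + 1)))

theorem signChanges_zero (g : ℝ → ℝ) : SignChanges g 0 :=
  ⟨fun _ => 1 / 2, Subsingleton.strictMono (α := Fin 1) _, fun _ => ⟨by norm_num, by norm_num⟩,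
    fun k => k.elim0⟩

section
variable {g : ℝ → ℝ} {ε : ℝ} {s : ℕ → ℝ} {m : ℕ}

theorem SignChanges.exists_altSign (h : SignChanges g (m + 1)) :
    ∃ ε s, AltSign g ε s (m + 2) := by
  obtain ⟨x, hmono, hmem, halt⟩ := h
  let s : ℕ → ℝ := fun i => if hi : i < m + 2 then x ⟨i, hi⟩ else 0
  have hs : ∀ i (hi : i < m + 2), s i = x ⟨i, hi⟩ := fun i hi => dif_pos hi
  have halt' : ∀ i, i + 1 < m + 2 → g (s i) * g (s (i + 1)) < 0 := fun i hi => by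
    rw [hs i (by omega), hs (i + 1) hi]
    exact halt ⟨i, by omega⟩
  have hsign : ∀ i < m + 2, 0 < (-1) ^ i * g (s 0) * g (s i) := by
    intro i hi
    induction i with
    | zero =>
      rw [pow_zero, one_mul]
      exact mul_self_pos.2 (left_ne_zero_of_mul (halt' 0 (by omega)).ne)
    | succ i ih =>
      have := ih (by omega)
      rw [pow_succ]
      nlinarith [mul_neg_of_pos_of_neg this (halt' i hi), sq_nonneg (g (s i))]
  refine ⟨g (s 0), s, fun i hi => ⟨?_, hsign i hi⟩, fun i hi => ?_⟩
  · simpa [hs i hi] using hmem ⟨i, hi⟩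
  · rw [hs i (by omega), hs (i + 1) hi]
    exact hmono (Fin.mk_lt_mk.2 (Nat.lt_succ_self i))

theorem AltSign.signChanges (h : AltSign g ε s (m + 1)) : SignChanges g m := by
  refine ⟨fun k => s k, Fin.strictMono_iff_lt_succ.2 fun k => h.2 k (by omega),
    fun k => (h.1 k k.isLt).1, fun k => ?_⟩
  have h0 := (h.1 k (by omega)).2
  have h1 := (h.1 (k + 1) (by omega)).2
  simp only [Fin.val_castSucc, Fin.val_succ]
  rw [pow_succ] at h1
  nlinarith [sq_nonneg ((-1) ^ (k : ℕ) * ε)]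

theorem AltSign.of_eq_mul_left {c h : ℝ → ℝ} (hs : AltSign g ε s m)
    (hc : ∀ x ∈ Ioo 0 1, 0 < c x) (hgh : ∀ x ∈ Ioo 0 1, h x = c x * g x) :
    AltSign h ε s m := by
  refine ⟨fun i hi => ?_, hs.2⟩
  obtain ⟨hmem, hsign⟩ := hs.1 i hi
  refine ⟨hmem, ?_⟩
  rw [hgh _ hmem, mul_left_comm]
  exact mul_pos (hc _ hmem) hsign

theorem AltSign.snoc_of_continuousWithinAt (hs : AltSign g ε s m)
    (hg : ContinuousWithinAt g (Icc 0 1) 1) (h1 : 0 < (-1) ^ m * ε * g 1) :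
    ∃ t, AltSign g ε t (m + 1) := by
  have hev : ∀ᶠ x in 𝓝[Ioo 0 1] (1 : ℝ),
      x ∈ Ioo 0 1 ∧ (∀ i ∈ Finset.range m, s i < x) ∧ 0 < (-1) ^ m * ε * g x := by
    refine eventually_mem_nhdsWithin.and (.and ?_ ?_)
    · refine (Finset.eventually_all _).2 fun i hi => ?_
      exact (eventually_gt_nhds (hs.1 i (Finset.mem_range.1 hi)).1.2).filter_mono
        nhdsWithin_le_nhds
    · exact ((hg.mono Ioo_subset_Icc_self).const_mul _).eventually_const_lt h1
  have := right_nhdsWithin_Ioo_neBot (zero_lt_one' ℝ)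
  obtain ⟨c, hc, hsc, hgc⟩ := hev.exists
  refine ⟨Function.update s m c, fun i hi => ?_, fun i hi => ?_⟩
  · rcases (Nat.lt_succ_iff.1 hi).lt_or_eq with hi | rfl
    · rw [Function.update_of_ne hi.ne]
      exact hs.1 i hi
    · rw [Function.update_self]
      exact ⟨hc, hgc⟩
  · rw [Function.update_of_ne (by omega)]
    rcases (Nat.lt_succ_iff.1 hi).lt_or_eq with hi | hi
    · rw [Function.update_of_ne hi.ne]
      exact hs.2 i hi
    · rw [hi, Function.update_self]
      exact hsc i (Finset.mem_range.2 (by omega))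

theorem AltSign.weakAltSign (hs : AltSign g ε s (m + 1)) : WeakAltSign g ε s m :=
  ⟨fun i hi => ⟨Ioo_subset_Icc_self (hs.1 i (by omega)).1, (hs.1 i (by omega)).2.le⟩,
    fun i hi => ⟨hs.2 i (by omega), Or.inl (hs.1 i (by omega)).2⟩⟩

theorem AltSign.weakAltSign_cons (hs : AltSign g ε s m) (h0 : g 0 = 0) :
    WeakAltSign g (-ε) (fun | 0 => 0 | i + 1 => s i) m := by
  have hsign : ∀ i < m, 0 < (-1) ^ (i + 1) * -ε * g (s i) := fun i hi => by
    simpa [pow_succ] using (hs.1 i hi).2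
  refine ⟨fun i hi => ?_, fun i hi => ?_⟩
  · rcases i with _ | i
    · simp [h0]
    · exact ⟨Ioo_subset_Icc_self (hs.1 i hi).1, (hsign i hi).le⟩
  · rcases i with _ | i
    · exact ⟨(hs.1 0 hi).1.1, Or.inr (hsign 0 hi)⟩
    · exact ⟨hs.2 i hi, Or.inl (hsign i (by omega))⟩

theorem WeakAltSign.snoc {a : ℕ → ℝ} (ha : WeakAltSign g ε a m) (ham : a m < 1)
    (hm : 0 < (-1) ^ m * ε * g (a m)) (h1 : 0 ≤ (-1) ^ (m + 1) * ε * g 1) :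
    WeakAltSign g ε (Function.update a (m + 1) 1) (m + 1) := by
  refine ⟨fun i hi => ?_, fun i hi => ?_⟩
  · rcases hi.lt_or_eq with hi | rfl
    · rw [Function.update_of_ne hi.ne]
      exact ha.1 i (by omega)
    · rw [Function.update_self]
      exact ⟨right_mem_Icc.2 zero_le_one, h1⟩
  · rw [Function.update_of_ne (by omega)]
    rcases (Nat.lt_succ_iff.1 hi).lt_or_eq with hi | rfl
    · rw [Function.update_of_ne (by omega)]
      exact ha.2 i hi
    · rw [Function.update_self]
      exact ⟨ham, Or.inl hm⟩

theorem AltSign.weakAltSign_cons_snoc (hs : AltSign g ε s (m + 1)) (h0 : g 0 = 0)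
    (h1 : g 1 = 0) :
    WeakAltSign g (-ε)
      (Function.update (fun | 0 => 0 | i + 1 => s i) (m + 2) 1) (m + 2) := by
  refine (hs.weakAltSign_cons h0).snoc (hs.1 m (by omega)).1.2 ?_ (by simp [h1])
  simpa [pow_succ] using (hs.1 m (by omega)).2

theorem hasDerivAt_Dv_s7 (hg : DifferentiableOn ℝ g (Icc 0 1)) {x : ℝ} (hx : x ∈ Ioo 0 1) :
    HasDerivAt g (Dv g x) x := by
  have hmem : Icc (0 : ℝ) 1 ∈ 𝓝 x := Icc_mem_nhds hx.1 hx.2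
  rw [Dv, derivWithin_of_mem_nhds hmem]
  exact ((hg x (Ioo_subset_Icc_self hx)).differentiableAt hmem).hasDerivAt

theorem WeakAltSign.exists_altSign_Dv {a : ℕ → ℝ} (hg : DifferentiableOn ℝ g (Icc 0 1))
    (ha : WeakAltSign g ε a m) : ∃ s, AltSign (Dv g) (-ε) s m := by
  have hmvt : ∀ i < m, ∃ c ∈ Ioo (a i) (a (i + 1)), 0 < (-1) ^ i * -ε * Dv g c := by
    intro i hi
    obtain ⟨hai, hsi⟩ := ha.1 i hi.le
    obtain ⟨hai1, hsi1⟩ := ha.1 (i + 1) hi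
    obtain ⟨hlt, hstrict⟩ := ha.2 i hi
    obtain ⟨c, hc, hslope⟩ := exists_hasDerivAt_eq_slope g (Dv g) hlt
      (hg.continuousOn.mono (Icc_subset_Icc hai.1 hai1.2))
      fun x hx => hasDerivAt_Dv_s7 hg ⟨hai.1.trans_lt hx.1, hx.2.trans_le hai1.2⟩
    have hincr : 0 < (-1) ^ i * ε * (g (a i) - g (a (i + 1))) := by
      rw [pow_succ] at hsi1 hstrict
      rcases hstrict with h | h <;> nlinarith
    refine ⟨c, hc, ?_⟩
    rw [hslope, show (-1) ^ i * -ε * ((g (a (i + 1)) - g (a i)) / (a (i + 1) - a i)) =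
      (-1) ^ i * ε * (g (a i) - g (a (i + 1))) / (a (i + 1) - a i) by ring]
    exact div_pos hincr (sub_pos.2 hlt)
  choose! s hsmem hsign using hmvt
  refine ⟨s, fun i hi => ⟨⟨?_, ?_⟩, hsign i hi⟩, fun i hi => ?_⟩
  · exact (ha.1 i hi.le).1.1.trans_lt (hsmem i hi).1
  · exact (hsmem i hi).2.trans_le (ha.1 (i + 1) hi).1.2
  · exact (hsmem i (by omega)).2.trans (hsmem (i + 1) hi).1

theorem AltSign.exists_altSign_Dv_of_mul_Dv_neg (hg : DifferentiableOn ℝ g (Icc 0 1))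
    (hg' : ContinuousWithinAt (Dv g) (Icc 0 1) 1) (hs : AltSign g ε s (m + 1))
    (hbd : g 1 ≠ 0 → g 1 * Dv g 1 < 0) : ∃ t, AltSign (Dv g) (-ε) t (m + 1) := by
  by_cases h1 : 0 ≤ (-1) ^ (m + 1) * ε * g 1
  · exact (hs.weakAltSign.snoc (hs.1 m (by omega)).1.2 (hs.1 m (by omega)).2 h1).exists_altSign_Dv
      hg
  obtain ⟨t, ht⟩ := hs.weakAltSign.exists_altSign_Dv hg
  refine ht.snoc_of_continuousWithinAt hg' ?_
  have hbd' := hbd fun h => h1 (by simp [h])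
  rw [pow_succ] at h1
  nlinarith [mul_pos_of_neg_of_neg (not_le.1 h1) hbd', sq_nonneg (g 1)]

end

theorem stmt_7_general (p r f y : ℝ → ℝ) (alpha : ℝ) (n : ℕ)
    (hp : ∀ x ∈ Icc (0:ℝ) 1, 0 < p x) (hr : ∀ x ∈ Icc (0:ℝ) 1, 0 < r x)
    (halpha : 0 ≤ alpha)
    (hy : ContDiffOn ℝ 2 y (Icc 0 1))
    (hpy : ContDiffOn ℝ 2 (fun x => p x * Dv (Dv y) x) (Icc 0 1))
    (heq : ∀ x ∈ Icc (0:ℝ) 1, Dv (Dv (fun t => p t * Dv (Dv y) t)) x = r x * f x)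
    (hbc : y 0 = 0 ∧ Dv y 0 = 0 ∧ Dv y 1 = 0 ∧
      Dv (fun t => p t * Dv (Dv y) t) 1 + alpha * f 1 = 0)
    (hsc : SignChanges y n) :
    SignChanges f n := by
  obtain ⟨hy0, hy'0, hy'1, hw'1⟩ := hbc
  obtain _ | n := n
  · exact signChanges_zero f
  set w := fun t => p t * Dv (Dv y) t
  have hDv : ∀ {g : ℝ → ℝ}, ContDiffOn ℝ 2 g (Icc 0 1) → ContDiffOn ℝ 1 (Dv g) (Icc 0 1) :=
    fun hg => hg.derivWithin uniqueDiffOn_Icc_zero_one le_rfl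
  have h1 : (1 : ℝ) ∈ Icc 0 1 := right_mem_Icc.2 zero_le_one
  have hbd : Dv w 1 ≠ 0 → Dv w 1 * Dv (Dv w) 1 < 0 := by
    intro hw1
    have hαf : alpha * f 1 ≠ 0 := fun h => hw1 (by linarith)
    have hα : 0 < alpha := halpha.lt_of_ne (left_ne_zero_of_mul hαf).symm
    rw [heq 1 h1, show Dv w 1 = -(alpha * f 1) by linarith]
    linarith [mul_pos (mul_pos hα (hr 1 h1)) (sq_pos_of_ne_zero (right_ne_zero_of_mul hαf))]
  obtain ⟨ε, t, ht⟩ := hsc.exists_altSign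
  obtain ⟨t1, ht1⟩ := (ht.weakAltSign_cons hy0).exists_altSign_Dv (hy.differentiableOn two_ne_zero)
  obtain ⟨t2, ht2⟩ := (ht1.weakAltSign_cons_snoc hy'0 hy'1).exists_altSign_Dv
    ((hDv hy).differentiableOn one_ne_zero)
  have ht3 := ht2.of_eq_mul_left (h := w) (fun x hx => hp x (Ioo_subset_Icc_self hx))
    fun _ _ => rfl
  obtain ⟨t4, ht4⟩ := ht3.weakAltSign.exists_altSign_Dv (hpy.differentiableOn two_ne_zero)
  obtain ⟨t5, ht5⟩ := ht4.exists_altSign_Dv_of_mul_Dv_neg ((hDv hpy).differentiableOn one_ne_zero)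
    ((hDv hpy).continuousOn_derivWithin uniqueDiffOn_Icc_zero_one le_rfl 1 h1) hbd
  refine (ht5.of_eq_mul_left (h := f) (c := fun x => (r x)⁻¹)
    (fun x hx => inv_pos.2 (hr x (Ioo_subset_Icc_self hx))) fun x hx => ?_).signChanges
  rw [heq x (Ioo_subset_Icc_self hx), inv_mul_cancel_left₀ (hr x (Ioo_subset_Icc_self hx)).ne']

theorem stmt_7 (p r f y : ℝ → ℝ) (alpha : ℝ) (n : ℕ)
    (hpc : ContinuousOn p (Icc 0 1)) (hrc : ContinuousOn r (Icc 0 1))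
    (hp : ∀ x ∈ Icc (0:ℝ) 1, 0 < p x) (hr : ∀ x ∈ Icc (0:ℝ) 1, 0 < r x)
    (halpha : 0 ≤ alpha)
    (hfc : ContinuousOn f (Icc 0 1))
    (hy : ContDiffOn ℝ 2 y (Icc 0 1))
    (hpy : ContDiffOn ℝ 2 (fun x => p x * Dv (Dv y) x) (Icc 0 1))
    (heq : ∀ x ∈ Icc (0:ℝ) 1, Dv (Dv (fun t => p t * Dv (Dv y) t)) x = r x * f x)
    (hbc : y 0 = 0 ∧ Dv y 0 = 0 ∧ Dv y 1 = 0 ∧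
      Dv (fun t => p t * Dv (Dv y) t) 1 + alpha * f 1 = 0)
    (hsc : SignChanges y n) :
    SignChanges f n :=
  stmt_7_general p r f y alpha n hp hr halpha hy hpy heq hbc hsc
end
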